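/- Let K be a perfect field of characteristic p > 0 equipped with an additive real-valued valuation v, let c ≥ 0, and let a, b : ℕ → K be sequences with v(a_k) ≥ −c and v(b_k) ≥ −c for every k. For m ≥ 0 set S_m = Σ_{k=0}^m a_k^{1/p^k} and S'_m = (a_0 − b_0) + Σ_{k=1}^m (a_k + b_{k-1}^p − b_k)^{1/p^k}. Then both sequences m ↦ min{0, v(S_m)} and m ↦ min{0, v(S'_m)} converge (with the convention min{0, ∞} = 0), their limits are equal, and moreover inf_{k≥0} min{0, v(a_k)} ≤ lim_{m→∞} min{0, v(S_m)}. -/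

import Mathlib

/-!
Write `⌊w⌋ = min 0 w` for `w ∈ ℝ ∪ {∞}`. If `v (x - y) ≥ -ε` with `ε ≥ 0`, the ultrametric
inequality gives `|⌊v x⌋ - ⌊v y⌋| ≤ ε`. Taking `p^k`-th roots divides valuations by `p^k`,
so consecutive partial sums `S_m` differ by an element of valuation `≥ -c / p^(m+1)`: the
sequence `⌊v S_m⌋` is Cauchy. The Artin–Schreier perturbation telescopes,
`S'_m = S_m - b_m^{1/p^m}`, so `⌊v S'_m⌋` is within `c / p^m` of `⌊v S_m⌋` and has the same
limit. Finally every term `a_k^{1/p^k}` has `⌊v⌋ ≥ ⌊v a_k⌋ / p^k ≥ inf_k ⌊v a_k⌋`, hence so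
does every `S_m`.
-/

open Filter Finset

def minZero (w : WithTop ℝ) : ℝ := min 0 (w.untopD 0)

theorem coe_minZero (w : WithTop ℝ) : ((minZero w : ℝ) : WithTop ℝ) = min 0 w := by
  induction w with
  | top => simp [minZero]
  | coe s => simp [minZero]

theorem minZero_le_zero (w : WithTop ℝ) : minZero w ≤ 0 := min_le_left _ _

theorem le_minZero_iff {t : ℝ} {w : WithTop ℝ} (ht : t ≤ 0) :
    t ≤ minZero w ↔ (t : WithTop ℝ) ≤ w := by
  rw [← WithTop.coe_le_coe, coe_minZero, le_min_iff]
  simp [ht]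

theorem coe_minZero_le (w : WithTop ℝ) : ((minZero w : ℝ) : WithTop ℝ) ≤ w := by
  rw [coe_minZero]; exact min_le_right _ _

theorem WithTop.eq_zero_of_self_add {x : WithTop ℝ} (hx : x ≠ ⊤) (h : x = x + x) : x = 0 := by
  lift x to ℝ using hx
  norm_cast at h ⊢
  linarith

theorem WithTop.coe_div_le_of_coe_le_nsmul {t : ℝ} {w : WithTop ℝ} {n : ℕ} (hn : 0 < n)
    (h : (t : WithTop ℝ) ≤ n • w) : ((t / n : ℝ) : WithTop ℝ) ≤ w := by
  induction w with
  | top => exact le_top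
  | coe s =>
    rw [← WithTop.coe_nsmul, WithTop.coe_le_coe, nsmul_eq_mul] at h
    rw [WithTop.coe_le_coe, div_le_iff₀ (by positivity)]
    linarith

section Valuation

variable {R : Type*} [Ring R] (v : AddValuation R (WithTop ℝ))

theorem minZero_sub_le_of_le_map_sub {x y : R} {ε : ℝ} (hε : 0 ≤ ε)
    (h : ((-ε : ℝ) : WithTop ℝ) ≤ v (y - x)) : minZero (v x) - ε ≤ minZero (v y) := by
  have hx := minZero_le_zero (v x)
  rw [le_minZero_iff (by linarith), ← add_sub_cancel x y]
  refine v.map_le_add ((WithTop.coe_le_coe.2 ?_).trans (coe_minZero_le _))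
    ((WithTop.coe_le_coe.2 ?_).trans h) <;> linarith

theorem dist_minZero_le {x y : R} {ε : ℝ} (hε : 0 ≤ ε)
    (h : ((-ε : ℝ) : WithTop ℝ) ≤ v (x - y)) : dist (minZero (v x)) (minZero (v y)) ≤ ε := by
  have h₁ := minZero_sub_le_of_le_map_sub v hε h
  have h₂ := minZero_sub_le_of_le_map_sub v hε (v.map_sub_swap x y ▸ h)
  rw [Real.dist_eq, abs_sub_le_iff]
  constructor <;> linarith

theorem cauchySeq_minZero_of_le_geometric {s : ℕ → R} {C r : ℝ} (hC : 0 ≤ C) (hr₀ : 0 ≤ r)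
    (hr : r < 1) (h : ∀ m, ((-(C * r ^ m) : ℝ) : WithTop ℝ) ≤ v (s m - s (m + 1))) :
    CauchySeq fun m => minZero (v (s m)) :=
  cauchySeq_of_le_geometric r C hr fun m => dist_minZero_le v (by positivity) (h m)

theorem Filter.Tendsto.minZero_of_le_map_sub {s t : ℕ → R} {ε : ℕ → ℝ} {l : ℝ}
    (hs : Tendsto (fun m => minZero (v (s m))) atTop (nhds l)) (hε₀ : ∀ m, 0 ≤ ε m)
    (hε : Tendsto ε atTop (nhds 0)) (h : ∀ m, ((-ε m : ℝ) : WithTop ℝ) ≤ v (s m - t m)) :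
    Tendsto (fun m => minZero (v (t m))) atTop (nhds l) :=
  hs.congr_dist <| squeeze_zero (fun _ => dist_nonneg)
    (fun m => dist_minZero_le v (hε₀ m) (h m)) hε

end Valuation

section Perfect

variable {K : Type*} (p : ℕ)

theorem iterate_frobeniusEquiv_symm [CommSemiring K] [ExpChar K p] [PerfectRing K p] (k : ℕ) :
    (frobeniusEquiv K p).symm^[k] = ⇑((iterateFrobeniusEquiv K p k).symm) := by
  rw [iterateFrobeniusEquiv_symm, RingAut.coe_pow]

theorem sum_iterate_frobeniusEquiv_symm_add_artinSchreier [CommRing K] [ExpChar K p]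
    [PerfectRing K p] (a b : ℕ → K) (m : ℕ) :
    ∑ k ∈ range (m + 1), (frobeniusEquiv K p).symm^[k]
        (a k + (if k = 0 then 0 else b (k - 1) ^ p) - b k) =
      ∑ k ∈ range (m + 1), (frobeniusEquiv K p).symm^[k] (a k)
        - (frobeniusEquiv K p).symm^[m] (b m) := by
  have map_add_sub (k : ℕ) (x y z : K) : (frobeniusEquiv K p).symm^[k] (x + y - z) =
      (frobeniusEquiv K p).symm^[k] x + (frobeniusEquiv K p).symm^[k] y
        - (frobeniusEquiv K p).symm^[k] z := by
    simp only [iterate_frobeniusEquiv_symm, map_add, map_sub]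
  induction m with
  | zero => simp
  | succ m ih =>
    rw [sum_range_succ, ih, sum_range_succ _ (m + 1), if_neg m.succ_ne_zero, Nat.add_sub_cancel,
      map_add_sub, Function.iterate_succ_apply _ m (b m ^ p), frobeniusEquiv_symm_pow]
    ring

variable [CommRing K] [ExpChar K p] [PerfectRing K p] (v : AddValuation K (WithTop ℝ))

theorem le_map_iterate_frobeniusEquiv_symm {x : K} {t : ℝ} (h : (t : WithTop ℝ) ≤ v x) (k : ℕ) :
    ((t * ((p : ℝ)⁻¹) ^ k : ℝ) : WithTop ℝ) ≤ v ((frobeniusEquiv K p).symm^[k] x) := by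
  have hp := expChar_pos K p
  rw [← iterate_frobeniusEquiv_symm_pow_p_pow K p x k, v.map_pow] at h
  simpa [div_eq_mul_inv] using WithTop.coe_div_le_of_coe_le_nsmul (by positivity) h

theorem le_minZero_sum_iterate_frobeniusEquiv_symm {a : ℕ → K} {t : ℝ} (ht : t ≤ 0)
    (h : ∀ k, t ≤ minZero (v (a k))) (s : Finset ℕ) :
    t ≤ minZero (v (∑ k ∈ s, (frobeniusEquiv K p).symm^[k] (a k))) := by
  rw [le_minZero_iff ht]
  refine v.map_le_sum fun k _ => (WithTop.coe_le_coe.2 ?_).trans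
    (le_map_iterate_frobeniusEquiv_symm p v ((le_minZero_iff ht).1 (h k)) k)
  have : ((p : ℝ)⁻¹) ^ k ≤ 1 :=
    pow_le_one₀ (by positivity) (inv_le_one_of_one_le₀ (by exact_mod_cast expChar_pos K p))
  nlinarith

end Perfect

theorem statement11_general {p : ℕ} [Fact p.Prime] {K : Type*} [Field K] [ExpChar K p]
    [PerfectRing K p]
    (v : K → WithTop ℝ)
    (hv0 : ∀ x : K, v x = ⊤ ↔ x = 0)
    (hvmul : ∀ x y : K, v (x * y) = v x + v y)
    (hvadd : ∀ x y : K, min (v x) (v y) ≤ v (x + y))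
    (c : ℝ) (hc : 0 ≤ c) (a b : ℕ → K)
    (ha : ∀ k : ℕ, ((-c : ℝ) : WithTop ℝ) ≤ v (a k))
    (hb : ∀ k : ℕ, ((-c : ℝ) : WithTop ℝ) ≤ v (b k)) :
    ∃ lim : ℝ,
      Tendsto
        (fun m : ℕ =>
          min 0 (WithTop.untopD 0 (v (∑ k ∈ Finset.range (m + 1),
            (fun y : K => (frobeniusEquiv K p).symm y)^[k] (a k)))))
        atTop (nhds lim) ∧
      Tendsto
        (fun m : ℕ =>
          min 0 (WithTop.untopD 0 (v (∑ k ∈ Finset.range (m + 1),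
            (fun y : K => (frobeniusEquiv K p).symm y)^[k]
              (a k + (if k = 0 then 0 else b (k - 1) ^ p) - b k)))))
        atTop (nhds lim) ∧
      (⨅ k : ℕ, min 0 (WithTop.untopD 0 (v (a k)))) ≤ lim := by
  let V : AddValuation K (WithTop ℝ) := AddValuation.of v ((hv0 0).2 rfl)
    (WithTop.eq_zero_of_self_add (by simp [hv0]) (by simpa using hvmul 1 1)) hvadd hvmul
  set r : ℝ := (p : ℝ)⁻¹
  have hr₀ : 0 ≤ r := by positivity
  have hr : r < 1 := inv_lt_one_of_one_lt₀ (by exact_mod_cast (Fact.out : p.Prime).one_lt)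
  have hroot {x : K} (hx : ((-c : ℝ) : WithTop ℝ) ≤ v x) (k : ℕ) :
      ((-(c * r ^ k) : ℝ) : WithTop ℝ) ≤ V ((frobeniusEquiv K p).symm^[k] x) := by
    simpa only [neg_mul] using le_map_iterate_frobeniusEquiv_symm p V hx k
  have hS : CauchySeq fun m => minZero (V (∑ k ∈ range (m + 1),
      (frobeniusEquiv K p).symm^[k] (a k))) := by
    refine cauchySeq_minZero_of_le_geometric V (C := c * r) (by positivity) hr₀ hr fun m => ?_
    rw [V.map_sub_swap, sum_range_succ_sub_sum]
    convert hroot (ha (m + 1)) (m + 1) using 3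
    ring
  obtain ⟨l, hl⟩ := cauchySeq_tendsto_of_complete hS
  have hbdd : BddBelow (Set.range fun k => minZero (v (a k))) :=
    ⟨-c, Set.forall_mem_range.2 fun k => (le_minZero_iff (by linarith)).2 (ha k)⟩
  refine ⟨l, hl, hl.minZero_of_le_map_sub V (ε := fun m => c * r ^ m) (fun m => by positivity)
    (by simpa using (tendsto_pow_atTop_nhds_zero_of_lt_one hr₀ hr).const_mul c) fun m => ?_,
    ge_of_tendsto' hl fun m => ?_⟩
  · rw [sum_iterate_frobeniusEquiv_symm_add_artinSchreier, sub_sub_cancel]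
    exact hroot (hb m) m
  · exact le_minZero_sum_iterate_frobeniusEquiv_symm p V
      ((ciInf_le hbdd 0).trans (minZero_le_zero _)) (ciInf_le hbdd) _

/-- Let `K` be a perfect field of characteristic `p > 0` with an additive
real-valued valuation `v`, let `c ≥ 0`, and let `a b : ℕ → K` satisfy `v (a k) ≥ −c` and
`v (b k) ≥ −c` for all `k`.  Set `S_m = Σ_{k=0}^m a_k^{1/p^k}` and
`S'_m = (a_0 − b_0) + Σ_{k=1}^m (a_k + b_{k-1}^p − b_k)^{1/p^k}` (the `p^k`-th roots taken
via the inverse Frobenius).  Then `m ↦ min{0, v(S_m)}` and `m ↦ min{0, v(S'_m)}` both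
converge (with `min{0, ∞} = 0`), their limits coincide, and
`inf_k min{0, v(a_k)} ≤ lim_m min{0, v(S_m)}`. -/
theorem statement11 {p : ℕ} [Fact p.Prime] {K : Type*} [Field K] [ExpChar K p]
    [CharP K p] [PerfectRing K p]
    (v : K → WithTop ℝ)
    (hv0 : ∀ x : K, v x = ⊤ ↔ x = 0)
    (hvmul : ∀ x y : K, v (x * y) = v x + v y)
    (hvadd : ∀ x y : K, min (v x) (v y) ≤ v (x + y))
    (c : ℝ) (hc : 0 ≤ c) (a b : ℕ → K)
    (ha : ∀ k : ℕ, ((-c : ℝ) : WithTop ℝ) ≤ v (a k))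
    (hb : ∀ k : ℕ, ((-c : ℝ) : WithTop ℝ) ≤ v (b k)) :
    ∃ lim : ℝ,
      Tendsto
        (fun m : ℕ =>
          min 0 (WithTop.untopD 0 (v (∑ k ∈ Finset.range (m + 1),
            (fun y : K => (frobeniusEquiv K p).symm y)^[k] (a k)))))
        atTop (nhds lim) ∧
      Tendsto
        (fun m : ℕ =>
          min 0 (WithTop.untopD 0 (v (∑ k ∈ Finset.range (m + 1),
            (fun y : K => (frobeniusEquiv K p).symm y)^[k]
              (a k + (if k = 0 then 0 else b (k - 1) ^ p) - b k)))))
        atTop (nhds lim) ∧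
      (⨅ k : ℕ, min 0 (WithTop.untopD 0 (v (a k)))) ≤ lim :=
  statement11_general v hv0 hvmul hvadd c hc a b ha hb
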